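/- arXiv:0707.3910 — 7 statements merged into one kernel-verified Lean document; each statement's English description precedes it below -/
import Mathlib

section
/- For positive integers k ≤ N, the sum over j from 0 to N-k of C(2N+1, 2j)·C(N-j, k) equals C(2N-k, k)·4^(N-k). -/
/-!
Put `V n y = ∑ᵢ C(n+1, 2i+1) yⁱ` (`oddChooseSum`), so that `(1 + s)^(n+1) = E + s · V n (s²)`.
Since `1 + s` is a root of `t² = 2t + (s² - 1)`, Pascal's rule gives
`V (n+2) = 2 V (n+1) + (y - 1) V n`. Hence `W n = V n (1 + z)` obeys `W (n+2) = 2 W (n+1) + z W n`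
with `W 0 = 1`, `W 1 = 2`: it counts tilings of a strip of length `n` by dominoes of weight `z`
and squares of weight `2`, so its coefficient of `zᵏ` is `C(n-k, k) 2^(n-2k)`. Reflecting
`j ↦ N - j`, the sum in the theorem is the coefficient of `zᵏ` in `W (2N)`.
-/

open Finset Polynomial

section OddChooseSum

variable {R : Type*} [CommSemiring R]

def oddChooseSum (n : ℕ) (y : R) : R :=
  ∑ i ∈ range (n / 2 + 1), ((n + 1).choose (2 * i + 1) : R) * y ^ i

theorem oddChooseSum_eq_sum_range {n B : ℕ} (hB : n / 2 < B) (y : R) :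
    ∑ i ∈ range B, ((n + 1).choose (2 * i + 1) : R) * y ^ i = oddChooseSum n y := by
  refine (sum_subset (range_subset_range.2 hB) fun i _ hi => ?_).symm
  rw [mem_range, not_lt] at hi
  rw [Nat.choose_eq_zero_of_lt (by omega), Nat.cast_zero, zero_mul]

theorem choose_add_three_add_choose (n m : ℕ) :
    (n + 2 + 1).choose (m + 2) + (n + 1).choose (m + 2) =
      2 * (n + 1 + 1).choose (m + 2) + (n + 1).choose m := by
  simp only [Nat.choose_succ_succ']
  ring

theorem oddChooseSum_add_two (n : ℕ) (y : R) :
    oddChooseSum (n + 2) y + oddChooseSum n y =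
      2 * oddChooseSum (n + 1) y + y * oddChooseSum n y := by
  have hB : ∀ m ≤ n + 2, m / 2 < n / 2 + 2 := fun m hm => by omega
  conv_lhs =>
    rw [← oddChooseSum_eq_sum_range (hB _ le_rfl), ← oddChooseSum_eq_sum_range (hB n (by omega))]
  rw [← oddChooseSum_eq_sum_range (hB (n + 1) (by omega)), oddChooseSum, mul_sum, mul_sum,
    ← sum_add_distrib, sum_range_succ' _ (n / 2 + 1), sum_range_succ' _ (n / 2 + 1)]
  conv_rhs => rw [add_right_comm, ← sum_add_distrib]
  congr 1
  · refine sum_congr rfl fun i _ => ?_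
    rw [← add_mul, ← Nat.cast_add, show 2 * (i + 1) + 1 = 2 * i + 1 + 2 by ring,
      choose_add_three_add_choose]
    push_cast
    ring
  · simp only [mul_zero, zero_add, Nat.choose_one_right, Nat.cast_add, Nat.cast_ofNat,
      Nat.cast_one, pow_zero, mul_one]
    ring

end OddChooseSum

section Coefficients

local notation "W" n => oddChooseSum n (1 + X : ℕ[X])

theorem coeff_oddChooseSum_one_add_X (n k : ℕ) :
    (W n).coeff k = ∑ i ∈ range (n / 2 + 1), (n + 1).choose (2 * i + 1) * i.choose k := by
  simp [oddChooseSum, coeff_one_add_X_pow]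

theorem coeff_oddChooseSum_one_add_X_of_lt {n k : ℕ} (h : n < 2 * k) : (W n).coeff k = 0 := by
  rw [coeff_oddChooseSum_one_add_X]
  refine sum_eq_zero fun i hi => ?_
  rw [mem_range] at hi
  rw [Nat.choose_eq_zero_of_lt (by omega : i < k), mul_zero]

theorem coeff_oddChooseSum_one_add_X_add_two (n k : ℕ) :
    (W (n + 2)).coeff (k + 1) = 2 * (W (n + 1)).coeff (k + 1) + (W n).coeff k := by
  have h := congrArg (coeff · (k + 1)) (oddChooseSum_add_two n (1 + X : ℕ[X]))
  simp only [coeff_add, add_mul, one_mul, coeff_X_mul, coeff_ofNat_mul] at h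
  omega

theorem coeff_zero_oddChooseSum_one_add_X_add_two (n : ℕ) :
    (W (n + 2)).coeff 0 = 2 * (W (n + 1)).coeff 0 := by
  have h := congrArg (coeff · 0) (oddChooseSum_add_two n (1 + X : ℕ[X]))
  simp only [coeff_add, add_mul, one_mul, coeff_X_mul_zero, coeff_ofNat_mul] at h
  omega

theorem coeff_zero_oddChooseSum_one_add_X (m : ℕ) : (W m).coeff 0 = 2 ^ m := by
  induction m using Nat.twoStepInduction with
  | zero => simp [coeff_oddChooseSum_one_add_X]
  | one => simp [coeff_oddChooseSum_one_add_X]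
  | more m _ ih => rw [coeff_zero_oddChooseSum_one_add_X_add_two, ih, pow_succ _ (m + 1), mul_comm]

theorem coeff_oddChooseSum_one_add_X_two_mul_add (k m : ℕ) :
    (W (2 * k + m)).coeff k = (k + m).choose k * 2 ^ m := by
  induction k generalizing m with
  | zero => simpa using coeff_zero_oddChooseSum_one_add_X m
  | succ k ihk =>
    induction m with
    | zero =>
      rw [show 2 * (k + 1) + 0 = 2 * k + 2 by ring, coeff_oddChooseSum_one_add_X_add_two,
        coeff_oddChooseSum_one_add_X_of_lt (by omega), ← add_zero (2 * k), ihk]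
      simp
    | succ m ihm =>
      rw [show 2 * (k + 1) + (m + 1) = 2 * k + (m + 1) + 2 by ring,
        coeff_oddChooseSum_one_add_X_add_two, ihk,
        show 2 * k + (m + 1) + 1 = 2 * (k + 1) + m by ring, ihm,
        show k + 1 + (m + 1) = (k + (m + 1)) + 1 by ring, Nat.choose_succ_succ',
        show k + (m + 1) = k + 1 + m by ring]
      ring

end Coefficients

theorem sum_range_choose_two_mul_mul_choose_eq_sum_odd (N k : ℕ) :
    ∑ j ∈ range (N - k + 1), (2 * N + 1).choose (2 * j) * (N - j).choose k =
      ∑ i ∈ range (N + 1), (2 * N + 1).choose (2 * i + 1) * i.choose k := by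
  rw [← sum_range_reflect _ (N + 1)]
  refine sum_subset (range_subset_range.2 (by omega)) (fun j hj hjk => ?_) |>.trans
    (sum_congr rfl fun j hj => ?_)
  · rw [mem_range] at hj hjk
    rw [Nat.choose_eq_zero_of_lt (by omega : N - j < k), mul_zero]
  · rw [mem_range] at hj
    rw [Nat.choose_symm_of_eq_add (by omega : 2 * N + 1 = 2 * j + (2 * (N + 1 - 1 - j) + 1)),
      Nat.add_sub_cancel]

theorem binom_sum_identity_general (N k : ℕ) (hkN : k ≤ N) :
    ∑ j ∈ Finset.range (N - k + 1),
      Nat.choose (2 * N + 1) (2 * j) * Nat.choose (N - j) k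
      = Nat.choose (2 * N - k) k * 4 ^ (N - k) := by
  have hN : 2 * N = 2 * k + 2 * (N - k) := by omega
  calc _ = ∑ i ∈ range (2 * N / 2 + 1), (2 * N + 1).choose (2 * i + 1) * i.choose k := by
        rw [sum_range_choose_two_mul_mul_choose_eq_sum_odd, Nat.mul_div_cancel_left N two_pos]
    _ = (oddChooseSum (2 * k + 2 * (N - k)) (1 + X : ℕ[X])).coeff k := by
        rw [coeff_oddChooseSum_one_add_X, ← hN]
    _ = _ := by
        rw [coeff_oddChooseSum_one_add_X_two_mul_add, pow_mul,
          show k + 2 * (N - k) = 2 * N - k by omega]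
        norm_num

theorem binom_sum_identity (N k : ℕ) (hk : 0 < k) (hkN : k ≤ N) :
    ∑ j ∈ Finset.range (N - k + 1),
      Nat.choose (2 * N + 1) (2 * j) * Nat.choose (N - j) k
      = Nat.choose (2 * N - k) k * 4 ^ (N - k) :=
  binom_sum_identity_general N k hkN
end

section
/- For a natural number N and a real (or polynomial variable) z, the sum over j from 0 to N of C(2N+1, 2j)·(1+z²)^(N-j) equals the sum over j from 0 to N of C(N+j, 2j)·4^j·z^(2(N-j)). -/
/-!
Put `a = √(1 + z²)`, `b = 1 + a`, `c = 1 - a`, so that `b - c = 2a`, `b + c = 2` and `-bc = z²`.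
In `b^(2N+1) - c^(2N+1)` only the odd powers of `a` survive, so by the binomial theorem the left
side is `(b^(2N+1) - c^(2N+1)) / (b - c)`. The right side is a Morgan–Voyce polynomial in
`x = -bc`, `y = (b + c)²`; together with its companion it obeys a pair of Pascal recurrences,
which `b^(k+2) - c^(k+2) = (b + c)(b^(k+1) - c^(k+1)) - bc(b^k - c^k)` shows are also solved by
the same quotient.
-/

open Finset

theorem Finset.sum_range_two_mul {M : Type*} [AddCommMonoid M] (f : ℕ → M) (n : ℕ) :
    ∑ k ∈ range (2 * n), f k = ∑ i ∈ range n, (f (2 * i) + f (2 * i + 1)) := by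
  induction n with
  | zero => simp
  | succ n ih => rw [Nat.mul_succ, sum_range_succ, sum_range_succ, ih, sum_range_succ, add_assoc]

section
variable {R : Type*} [CommRing R]

theorem one_add_pow_sub_one_sub_pow (a : R) (N : ℕ) :
    (1 + a) ^ (2 * N + 1) - (1 - a) ^ (2 * N + 1)
      = 2 * a * ∑ j ∈ range (N + 1), ((2 * N + 1).choose (2 * j) : R) * (a ^ 2) ^ (N - j) := by
  rw [sub_eq_add_neg 1 a, add_pow, add_pow, ← sum_sub_distrib,
    show 2 * N + 1 + 1 = 2 * (N + 1) by ring, sum_range_two_mul, mul_sum]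
  refine sum_congr rfl fun j hj => ?_
  have hj : j ≤ N := Nat.lt_succ_iff.mp (mem_range.mp hj)
  rw [show 2 * N + 1 - 2 * j = 2 * (N - j) + 1 by omega,
    show 2 * N + 1 - (2 * j + 1) = 2 * (N - j) by omega]
  simp only [one_pow, pow_succ, pow_mul]
  ring

/-- Homogenized Morgan–Voyce polynomials: `morganVoyceb 1 y N` and `morganVoyceB 1 y N` are the
classical `b_N(y) = ∑ C(N + j, N - j) y^j` and `B_N(y) = ∑ C(N + j + 1, N - j) y^j`. -/
def morganVoyceb (x y : R) (N : ℕ) : R :=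
  ∑ j ∈ range (N + 1), ((N + j).choose (2 * j) : R) * y ^ j * x ^ (N - j)

def morganVoyceB (x y : R) (N : ℕ) : R :=
  ∑ j ∈ range (N + 1), ((N + j + 1).choose (2 * j + 1) : R) * y ^ j * x ^ (N - j)

theorem mul_sum_range_pow_sub (x : R) (f : ℕ → R) (N : ℕ) :
    x * ∑ j ∈ range (N + 1), f j * x ^ (N - j)
      = ∑ j ∈ range (N + 1), f j * x ^ (N + 1 - j) := by
  rw [mul_sum]
  refine sum_congr rfl fun j hj => ?_
  rw [show N + 1 - j = N - j + 1 by have := mem_range.mp hj; omega, pow_succ]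
  ring

theorem morganVoyceB_succ (x y : R) (N : ℕ) :
    morganVoyceB x y (N + 1) = x * morganVoyceB x y N + morganVoyceb x y (N + 1) := by
  have hB : x * morganVoyceB x y N = ∑ j ∈ range (N + 2),
      ((N + 1 + j).choose (2 * j + 1) : R) * y ^ j * x ^ (N + 1 - j) := by
    rw [morganVoyceB, mul_sum_range_pow_sub, sum_range_succ _ (N + 1),
      Nat.choose_eq_zero_of_lt (by omega : N + 1 + (N + 1) < 2 * (N + 1) + 1)]
    simp only [Nat.cast_zero, zero_mul, add_zero]
    refine sum_congr rfl fun j _ => ?_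
    rw [add_right_comm]
  rw [hB, morganVoyceB, morganVoyceb, ← sum_add_distrib]
  refine sum_congr rfl fun j _ => ?_
  rw [show N + 1 + j + 1 = (N + 1 + j) + 1 from rfl, Nat.choose_succ_succ']
  push_cast
  ring

theorem morganVoyceb_succ (x y : R) (N : ℕ) :
    morganVoyceb x y (N + 1) = x * morganVoyceb x y N + y * morganVoyceB x y N := by
  have hb : x * morganVoyceb x y N = ∑ j ∈ range (N + 2),
      ((N + j).choose (2 * j) : R) * y ^ j * x ^ (N + 1 - j) := by
    rw [morganVoyceb, mul_sum_range_pow_sub, sum_range_succ _ (N + 1),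
      Nat.choose_eq_zero_of_lt (by omega : N + (N + 1) < 2 * (N + 1))]
    simp only [Nat.cast_zero, zero_mul, add_zero]
  rw [hb, morganVoyceb, morganVoyceB, mul_sum]
  simp only [sum_range_succ' _ (N + 1)]
  rw [add_right_comm _ _ (∑ i ∈ _, _), ← sum_add_distrib]
  congr 1
  · refine sum_congr rfl fun i _ => ?_
    rw [show N + 1 + (i + 1) = (N + i + 1) + 1 by ring, show 2 * (i + 1) = (2 * i + 1) + 1 by ring,
      Nat.choose_succ_succ', Nat.add_sub_add_right]
    push_cast
    ring_nf
  · simp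

theorem sub_mul_morganVoyceb_and_morganVoyceB (b c : R) (N : ℕ) :
    (b - c) * morganVoyceb (-(b * c)) ((b + c) ^ 2) N = b ^ (2 * N + 1) - c ^ (2 * N + 1) ∧
      (b - c) * (b + c) * morganVoyceB (-(b * c)) ((b + c) ^ 2) N
        = b ^ (2 * N + 2) - c ^ (2 * N + 2) := by
  induction N with
  | zero => exact ⟨by simp [morganVoyceb], by simp [morganVoyceB]; ring⟩
  | succ N ih =>
    obtain ⟨hb, hB⟩ := ih
    have hb' : (b - c) * morganVoyceb (-(b * c)) ((b + c) ^ 2) (N + 1)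
        = b ^ (2 * (N + 1) + 1) - c ^ (2 * (N + 1) + 1) := by
      rw [morganVoyceb_succ]
      linear_combination -(b * c) * hb + (b + c) * hB
    refine ⟨hb', ?_⟩
    rw [morganVoyceB_succ]
    linear_combination -(b * c) * hB + (b + c) * hb'

theorem sub_mul_morganVoyceb (b c : R) (N : ℕ) :
    (b - c) * morganVoyceb (-(b * c)) ((b + c) ^ 2) N = b ^ (2 * N + 1) - c ^ (2 * N + 1) :=
  (sub_mul_morganVoyceb_and_morganVoyceB b c N).1

end

theorem binom_poly_identity (N : ℕ) (z : ℝ) :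
    ∑ j ∈ Finset.range (N + 1),
      (Nat.choose (2 * N + 1) (2 * j) : ℝ) * (1 + z ^ 2) ^ (N - j)
      = ∑ j ∈ Finset.range (N + 1),
        (Nat.choose (N + j) (2 * j) : ℝ) * 4 ^ j * z ^ (2 * (N - j)) := by
  obtain ⟨a, ha_pos, ha⟩ : ∃ a : ℝ, 0 < a ∧ a ^ 2 = 1 + z ^ 2 :=
    ⟨√(1 + z ^ 2), by positivity, Real.sq_sqrt (by positivity)⟩
  refine mul_left_cancel₀ (by positivity : 2 * a ≠ 0) ?_
  calc 2 * a * ∑ j ∈ range (N + 1), ((2 * N + 1).choose (2 * j) : ℝ) * (1 + z ^ 2) ^ (N - j)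
      = (1 + a) ^ (2 * N + 1) - (1 - a) ^ (2 * N + 1) := by rw [one_add_pow_sub_one_sub_pow, ha]
    _ = ((1 + a) - (1 - a)) * morganVoyceb (-((1 + a) * (1 - a))) (((1 + a) + (1 - a)) ^ 2) N :=
        (sub_mul_morganVoyceb _ _ N).symm
    _ = 2 * a * ∑ j ∈ range (N + 1),
          ((N + j).choose (2 * j) : ℝ) * 4 ^ j * z ^ (2 * (N - j)) := by
        rw [show (1 + a) - (1 - a) = 2 * a by ring,
          show ((1 + a) + (1 - a)) ^ 2 = (4 : ℝ) by ring,
          show -((1 + a) * (1 - a)) = z ^ 2 by linear_combination ha, morganVoyceb]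
        simp only [pow_mul]
end

section
/- For real x with |x+1| suitably restricted (or as formal power series), ((1+√(x+1))^(2N+1) − (1−√(x+1))^(2N+1))/(2√(x+1)) equals the sum over k from 0 to N of C(2N-k, k)·4^(N-k)·x^k. -/
/-!
Put `a = 1 + √(x+1)` and `b = 1 - √(x+1)`, so that `a + b = 2` and `-ab = x`. The quotients
`(aⁿ⁺¹ - bⁿ⁺¹) / (a - b)` satisfy `uₙ₊₂ = (a + b) uₙ₊₁ - ab uₙ`, and by Pascal's rule so do the
Fibonacci polynomials `∑ₖ C(n-k, k) pⁿ⁻²ᵏ qᵏ` with `p = a + b`, `q = -ab`. Both start at `1, p`,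
so they agree; at `n = 2N` the Fibonacci polynomial at `p = 2`, `q = x` is the claimed sum.
-/

open Finset Finset.Nat

section FibPoly

variable {R : Type*}

/-- The Fibonacci polynomial `F_{n+1}(p, q) = ∑ₖ C(n-k, k) pⁿ⁻²ᵏ qᵏ`, indexed as in
`Nat.fib_succ_eq_sum_choose`. Terms with `j > i` vanish because `i.choose j = 0`, so the truncated
exponent `i - j` is harmless. -/
def fibPoly [CommSemiring R] (p q : R) (n : ℕ) : R :=
  ∑ ij ∈ antidiagonal n, (ij.1.choose ij.2 : R) * p ^ (ij.1 - ij.2) * q ^ ij.2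

section CommSemiring

variable [CommSemiring R] (p q : R)

@[simp]
theorem fibPoly_zero : fibPoly p q 0 = 1 := by
  simp [fibPoly]

@[simp]
theorem fibPoly_one : fibPoly p q 1 = p := by
  simp [fibPoly, sum_antidiagonal_succ]

theorem cast_choose_succ_mul_pow_sub (i j : ℕ) :
    (i.choose (j + 1) : R) * p ^ (i - j) = p * ((i.choose (j + 1) : R) * p ^ (i - (j + 1))) := by
  rcases le_or_gt i j with hij | hij
  · simp [Nat.choose_eq_zero_of_lt (Nat.lt_succ_of_le hij)]
  · rw [show i - j = i - (j + 1) + 1 by omega, pow_succ]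
    ring

theorem fibPoly_add_two (n : ℕ) :
    fibPoly p q (n + 2) = p * fibPoly p q (n + 1) + q * fibPoly p q n := by
  let t : ℕ × ℕ → R := fun ij ↦ (ij.1.choose ij.2 : R) * p ^ (ij.1 - ij.2) * q ^ ij.2
  have pascal (ij : ℕ × ℕ) :
      t (ij.1 + 1, ij.2 + 1) = p * t (ij.1, ij.2 + 1) + q * t ij := by
    simp only [t, Nat.choose_succ_succ', Nat.cast_add, Nat.add_sub_add_right]
    rw [add_mul, add_mul, cast_choose_succ_mul_pow_sub]
    ring
  change ∑ ij ∈ _, t ij = p * ∑ ij ∈ _, t ij + q * ∑ ij ∈ _, t ij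
  rw [sum_antidiagonal_succ', sum_antidiagonal_succ, sum_antidiagonal_succ',
    sum_congr rfl fun ij _ ↦ pascal ij, sum_add_distrib, mul_add, mul_sum, mul_sum]
  simp only [t, Nat.choose_zero_right, Nat.choose_zero_succ, Nat.cast_one, Nat.cast_zero,
    tsub_zero, zero_tsub, pow_succ, pow_zero, one_mul, mul_one, zero_mul, zero_add]
  ring

theorem fibPoly_two_mul (N : ℕ) :
    fibPoly p q (2 * N) =
      ∑ k ∈ range (N + 1), ((2 * N - k).choose k : R) * (p ^ 2) ^ (N - k) * q ^ k := by
  rw [fibPoly, ← sum_antidiagonal_swap, sum_antidiagonal_eq_sum_range_succ_mk]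
  symm
  apply sum_subset_zero_on_sdiff (range_subset_range.2 (by omega))
  · intro k hk
    simp only [mem_sdiff, mem_range] at hk
    simp [Nat.choose_eq_zero_of_lt (show 2 * N - k < k by omega)]
  · intro k hk
    simp only [mem_range] at hk
    simp only [Prod.swap_prod_mk, ← pow_mul]
    congr 3
    omega

end CommSemiring

theorem pow_succ_sub_pow_succ_eq_mul_fibPoly [CommRing R] (a b : R) (n : ℕ) :
    a ^ (n + 1) - b ^ (n + 1) = (a - b) * fibPoly (a + b) (-(a * b)) n := by
  induction n using Nat.twoStepInduction with
  | zero => simp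
  | one => rw [fibPoly_one]; ring
  | more n ih₁ ih₂ =>
    rw [fibPoly_add_two]
    linear_combination (a + b) * ih₂ - a * b * ih₁

end FibPoly

theorem sqrt_binom_identity (N : ℕ) (x : ℝ) (hx : -1 < x) :
    ((1 + Real.sqrt (x + 1)) ^ (2 * N + 1) - (1 - Real.sqrt (x + 1)) ^ (2 * N + 1))
      / (2 * Real.sqrt (x + 1))
      = ∑ k ∈ Finset.range (N + 1),
        (Nat.choose (2 * N - k) k : ℝ) * 4 ^ (N - k) * x ^ k := by
  set s := Real.sqrt (x + 1)
  have hs : s ^ 2 = x + 1 := Real.sq_sqrt (by linarith)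
  have hs₀ : s ≠ 0 := (Real.sqrt_pos.2 (by linarith)).ne'
  have hdiff : 1 + s - (1 - s) = 2 * s := by ring
  have hsum : 1 + s + (1 - s) = 2 := by ring
  have hprod : -((1 + s) * (1 - s)) = x := by linear_combination hs
  rw [pow_succ_sub_pow_succ_eq_mul_fibPoly, hdiff, hsum, hprod, fibPoly_two_mul,
    mul_div_cancel_left₀ _ (by positivity)]
  norm_num
end

section
/- For every natural number m, the integral from 0 to ∞ of 1/(z²+1)^(m+1) dz equals (π/2^(2m+1))·C(2m, m). -/
/-!
Substituting `z = tan x` turns the integral into `∫₀^{π/2} cos x ^ (2m) dx`, since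
`dz = dx / cos² x` and `1 / (tan² x + 1) = cos² x`. That integral is `π / 2` times the Wallis
product `∏_{i<m} (2i+1)/(2i+2)`, which is `C(2m, m) / 4^m` because the central binomial
coefficients satisfy `(n + 1) C(2n+2, n+1) = 2 (2n + 1) C(2n, n)`.
-/

open Real Set MeasureTheory intervalIntegral

theorem prod_range_odd_div_even_eq_centralBinom_div {K : Type*} [Field K] [CharZero K] (n : ℕ) :
    ∏ i ∈ Finset.range n, (2 * (i : K) + 1) / (2 * i + 2) = n.centralBinom / 4 ^ n := by
  induction n with
  | zero => simp
  | succ k ih =>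
    have hrec : ((k : K) + 1) * (k + 1).centralBinom = 2 * (2 * k + 1) * k.centralBinom := by
      exact_mod_cast Nat.succ_mul_centralBinom_succ k
    have hk : (k : K) + 1 ≠ 0 := Nat.cast_add_one_ne_zero k
    rw [Finset.prod_range_succ, ih]
    field_simp
    linear_combination (-2 * 4 ^ k : K) * hrec

theorem integral_cos_pow_two_mul (m : ℕ) :
    ∫ x in (0 : ℝ)..π / 2, cos x ^ (2 * m) = π / 2 ^ (2 * m + 1) * m.centralBinom := by
  rw [EulerSine.integral_cos_pow_eq, integral_sin_pow_even, prod_range_odd_div_even_eq_centralBinom_div,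
    pow_succ, pow_mul]
  ring

theorem image_tan_Ioo_zero_pi_div_two : tan '' Ioo 0 (π / 2) = Ioi 0 := by
  ext z
  constructor
  · rintro ⟨x, ⟨hx0, hx1⟩, rfl⟩
    exact tan_pos_of_pos_of_lt_pi_div_two hx0 hx1
  · intro hz
    refine ⟨arctan z, ⟨?_, arctan_lt_pi_div_two z⟩, tan_arctan z⟩
    simpa only [arctan_zero] using arctan_strictMono hz

theorem integral_Ioi_zero_eq_integral_tan {E : Type*} [NormedAddCommGroup E] [NormedSpace ℝ E]
    (f : ℝ → E) :
    ∫ z in Ioi 0, f z = ∫ x in Ioo 0 (π / 2), (cos x ^ 2)⁻¹ • f (tan x) := by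
  have hsub : Ioo 0 (π / 2) ⊆ Ioo (-(π / 2)) (π / 2) :=
    Ioo_subset_Ioo_left (by linarith [pi_pos])
  have hderiv : ∀ x ∈ Ioo 0 (π / 2), HasDerivWithinAt tan (1 / cos x ^ 2) (Ioo 0 (π / 2)) x :=
    fun x hx => (hasDerivAt_tan (cos_pos_of_mem_Ioo (hsub hx)).ne').hasDerivWithinAt
  rw [← image_tan_Ioo_zero_pi_div_two,
    integral_image_eq_integral_abs_deriv_smul measurableSet_Ioo hderiv (injOn_tan.mono hsub)]
  refine setIntegral_congr_fun measurableSet_Ioo fun x _ => ?_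
  rw [abs_of_nonneg (by positivity), one_div]

theorem one_div_tan_sq_add_one_pow {x : ℝ} (hx : cos x ≠ 0) (n : ℕ) :
    1 / (tan x ^ 2 + 1) ^ n = cos x ^ (2 * n) := by
  rw [one_div, ← inv_pow, add_comm, inv_one_add_tan_sq hx, pow_mul]

theorem wallis_formula (m : ℕ) :
    ∫ z in Set.Ioi (0 : ℝ), 1 / (z ^ 2 + 1) ^ (m + 1)
      = Real.pi / 2 ^ (2 * m + 1) * Nat.choose (2 * m) m := by
  have hcos : ∀ x ∈ Ioo 0 (π / 2), (cos x ^ 2)⁻¹ • (1 / (tan x ^ 2 + 1) ^ (m + 1))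
      = cos x ^ (2 * m) := fun x hx => by
    have hx : cos x ≠ 0 := (cos_pos_of_mem_Ioo ⟨by linarith [hx.1, pi_pos], hx.2⟩).ne'
    rw [one_div_tan_sq_add_one_pow hx, smul_eq_mul, pow_mul, pow_mul, pow_succ' (cos x ^ 2),
      inv_mul_cancel_left₀ (pow_ne_zero 2 hx)]
  calc ∫ z in Ioi 0, 1 / (z ^ 2 + 1) ^ (m + 1)
      = ∫ x in Ioo 0 (π / 2), cos x ^ (2 * m) := by
        rw [integral_Ioi_zero_eq_integral_tan, setIntegral_congr_fun measurableSet_Ioo hcos]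
    _ = ∫ x in (0 : ℝ)..π / 2, cos x ^ (2 * m) := by
        rw [integral_of_le (by positivity), integral_Ioc_eq_integral_Ioo]
    _ = π / 2 ^ (2 * m + 1) * Nat.choose (2 * m) m := by
        rw [integral_cos_pow_two_mul, Nat.centralBinom_eq_two_mul_choose]
end

section
/- For natural numbers r ≤ s-1, the integral from 0 to ∞ of u^(r−1/2)/(1+u)^s du equals (π/2^(2(s−1)))·C(2r, r)·C(2(s−r−1), s−r−1)·C(s−1, r)^(−1). -/
open Real MeasureTheory Set

lemma gamma_half (n : ℕ) :
    Real.Gamma ((n : ℝ) + 1/2) = Real.sqrt Real.pi * (2*n).factorial / (4^n * n.factorial) := by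
  induction n with
  | zero =>
    rw [show ((0:ℕ):ℝ) + 1/2 = 1/2 by norm_num, Real.Gamma_one_half_eq]
    simp
  | succ n ih =>
    have h : ((n:ℝ) + 1/2) ≠ 0 := by positivity
    have h1 : ((n+1 : ℕ) : ℝ) + 1/2 = ((n:ℝ) + 1/2) + 1 := by push_cast; ring
    have h2 : (2*(n+1)).factorial = (2*n+2) * ((2*n+1) * (2*n).factorial) := by
      have : 2*(n+1) = (2*n+1)+1 := by ring
      rw [this, Nat.factorial_succ, Nat.factorial_succ]
    rw [h1, Real.Gamma_add_one h, ih, h2]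
    have h4 : (4:ℝ)^(n+1) = 4 * 4^n := by ring
    have hne : (4:ℝ)^n ≠ 0 := by positivity
    have hne2 : ((n.factorial : ℝ)) ≠ 0 := by positivity
    push_cast [Nat.factorial_succ]
    field_simp
    ring

lemma real_beta {a b : ℝ} (ha : 0 < a) (hb : 0 < b) :
    ∫ x in (0:ℝ)..1, x ^ (a-1) * (1-x) ^ (b-1)
      = Real.Gamma a * Real.Gamma b / Real.Gamma (a+b) := by
  have h := Complex.Gamma_mul_Gamma_eq_betaIntegral (s := (a:ℂ)) (t := (b:ℂ))
    (by simpa using ha) (by simpa using hb)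
  rw [Complex.betaIntegral] at h
  have key : (∫ x in (0:ℝ)..1, (x:ℂ) ^ ((a:ℂ)-1) * ((1:ℂ)-(x:ℂ)) ^ ((b:ℂ)-1))
      = ((∫ x in (0:ℝ)..1, x ^ (a-1) * (1-x) ^ (b-1) : ℝ) : ℂ) := by
    rw [← intervalIntegral.integral_ofReal]
    apply intervalIntegral.integral_congr
    intro x hx
    rw [uIcc_of_le zero_le_one] at hx
    show (x:ℂ) ^ ((a:ℂ)-1) * ((1:ℂ)-(x:ℂ)) ^ ((b:ℂ)-1) = ((x ^ (a-1) * (1-x) ^ (b-1) : ℝ) : ℂ)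
    rw [Complex.ofReal_mul, Complex.ofReal_cpow hx.1, Complex.ofReal_cpow (by linarith [hx.2] : (0:ℝ) ≤ 1 - x)]
    push_cast
    ring
  rw [key] at h
  have hg : Real.Gamma (a+b) ≠ 0 := (Real.Gamma_pos_of_pos (by linarith)).ne'
  have := h
  rw [← Complex.ofReal_add, Complex.Gamma_ofReal, Complex.Gamma_ofReal, Complex.Gamma_ofReal] at this
  field_simp
  rw [mul_comm]
  exact_mod_cast this.symm

theorem beta_type_integral (r s : ℕ) (hrs : r ≤ s - 1) (hs : 1 ≤ s) :
    ∫ u in Set.Ioi (0 : ℝ), u ^ ((r : ℝ) - 1 / 2) / (1 + u) ^ s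
      = Real.pi / 2 ^ (2 * (s - 1)) * Nat.choose (2 * r) r
          * Nat.choose (2 * (s - r - 1)) (s - r - 1) * (Nat.choose (s - 1) r : ℝ)⁻¹ := by
  obtain ⟨m, rfl⟩ : ∃ m, s = r + m + 1 := ⟨s - r - 1, by omega⟩
  simp only [show r + m + 1 - 1 = r + m by omega, show r + m + 1 - r - 1 = m by omega]
  -- change of variables x ↦ x / (1 - x) from Ioo 0 1 to Ioi 0
  set f : ℝ → ℝ := fun x => x / (1 - x) with hf
  have himg : f '' Ioo 0 1 = Ioi 0 := by
    ext u
    constructor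
    · rintro ⟨x, hx, rfl⟩
      exact div_pos hx.1 (sub_pos.mpr hx.2)
    · intro hu
      have hu0 : (0:ℝ) < u := hu
      have h1u : (0:ℝ) < 1 + u := by linarith
      refine ⟨u / (1 + u), ⟨div_pos hu0 h1u, (div_lt_one h1u).mpr (by linarith)⟩, ?_⟩
      show u / (1 + u) / (1 - u / (1 + u)) = u
      have : 1 - u / (1 + u) = 1 / (1 + u) := by field_simp; ring
      rw [this]
      field_simp
  have hd : ∀ x ∈ Ioo (0:ℝ) 1, HasDerivWithinAt f (((1-x)^2)⁻¹) (Ioo 0 1) x := by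
    intro x hx
    have hne : (1:ℝ) - x ≠ 0 := (sub_pos.mpr hx.2).ne'
    have h1 : HasDerivAt f ((1*(1-x) - x*(0-1))/((1-x)^2)) x :=
      (hasDerivAt_id x).div ((hasDerivAt_const x 1).sub (hasDerivAt_id x)) hne
    have h2 : (1*(1-x) - x*(0-1))/((1-x)^2) = ((1-x)^2)⁻¹ := by
      field_simp
      ring
    exact (h2 ▸ h1).hasDerivWithinAt
  have hinj : InjOn f (Ioo 0 1) := by
    intro x hx y hy h
    have hx1 : (1:ℝ) - x ≠ 0 := (sub_pos.mpr hx.2).ne'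
    have hy1 : (1:ℝ) - y ≠ 0 := (sub_pos.mpr hy.2).ne'
    rw [hf] at h
    simp only at h
    rw [div_eq_div_iff hx1 hy1] at h
    nlinarith
  rw [← himg, integral_image_eq_integral_abs_deriv_smul measurableSet_Ioo hd hinj]
  set a : ℝ := (r:ℝ) + 1/2 with ha
  set b : ℝ := (m:ℝ) + 1/2 with hb
  have hcongr : ∀ x ∈ Ioo (0:ℝ) 1,
      |((1-x)^2)⁻¹| • (f x ^ ((r : ℝ) - 1 / 2) / (1 + f x) ^ (r+m+1))
        = x ^ (a-1) * (1-x) ^ (b-1) := by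
    intro x hx
    have hx0 : (0:ℝ) < x := hx.1
    have ht : (0:ℝ) < 1 - x := sub_pos.mpr hx.2
    have h1 : 1 + f x = (1-x)⁻¹ := by
      rw [hf]; field_simp; ring
    rw [h1, hf]
    simp only [smul_eq_mul]
    rw [abs_of_pos (by positivity), Real.div_rpow hx0.le ht.le, inv_pow,
      div_inv_eq_mul]
    rw [← Real.rpow_natCast (1-x) (r+m+1), ← Real.rpow_natCast (1-x) 2,
      ← Real.rpow_neg ht.le, div_eq_mul_inv (x ^ _), ← Real.rpow_neg ht.le]
    rw [show x ^ ((r:ℝ) - 1/2) = x ^ (a - 1) by congr 1; rw [ha]; ring]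
    rw [mul_comm, mul_assoc, mul_assoc, ← Real.rpow_add ht, ← Real.rpow_add ht]
    congr 1
    rw [hb]
    push_cast
    ring
  rw [setIntegral_congr_fun measurableSet_Ioo hcongr]
  rw [← integral_Ioc_eq_integral_Ioo, ← intervalIntegral.integral_of_le zero_le_one]
  rw [real_beta (by positivity) (by positivity)]
  have hab : a + b = ((r+m : ℕ) : ℝ) + 1 := by rw [ha, hb]; push_cast; ring
  rw [hab, Real.Gamma_nat_eq_factorial, ha, hb, gamma_half r, gamma_half m]
  -- final arithmetic
  rw [Nat.cast_choose ℝ (by omega : r ≤ 2*r), Nat.cast_choose ℝ (by omega : m ≤ 2*m),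
    Nat.cast_choose ℝ (by omega : r ≤ r + m)]
  simp only [show 2*r - r = r by omega, show 2*m - m = m by omega,
    show r + m - r = m by omega]
  have hπ : √Real.pi * √Real.pi = Real.pi := Real.mul_self_sqrt Real.pi_pos.le
  have h2 : (2:ℝ) ^ (2*(r+m)) = 4 ^ r * 4 ^ m := by
    rw [pow_mul]
    norm_num
    rw [pow_add]
  have f1 : ((r.factorial : ℝ)) ≠ 0 := by positivity
  have f2 : ((m.factorial : ℝ)) ≠ 0 := by positivity
  have f3 : (((r+m).factorial : ℝ)) ≠ 0 := by positivity
  have f4 : (((2*r).factorial : ℝ)) ≠ 0 := by positivity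
  have f5 : (((2*m).factorial : ℝ)) ≠ 0 := by positivity
  rw [h2, div_mul_div_comm,
    show √Real.pi * ((2*r).factorial:ℝ) * (√Real.pi * ((2*m).factorial:ℝ))
      = Real.pi * (((2*r).factorial:ℝ) * ((2*m).factorial:ℝ)) by rw [mul_mul_mul_comm, hπ]]
  field_simp
end

section
/- Let m, n be natural numbers with m+1 ≤ n ≤ 2m+1 and let a > −1 be real. Then ∫₀^∞ z^(2n)/(z⁴+2a z²+1)^(m+1) dz = (π/(2^(3m+3/2)(1+a)^(m+1/2)))·Σ_{j=0}^{n−m−1} 2^j(1+a)^j·C(2m−2j, m−j)·C(m−n+j, 2j)·C(2j, j)·C(m, j)^(−1). -/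
/-!
Put `c = 2(1 + a)` and `n = m + 1 + k`, so that `0 ≤ k ≤ m`. Since
`z⁴ + 2az² + 1 = z²((z - z⁻¹)² + c)`, the substitution `z ↦ z⁻¹` exchanges the numerators
`z^(2n)` and `z^(2(m - k))`, while `u = z - z⁻¹` maps `(0, ∞)` onto `ℝ` with
`du = (1 + z⁻²) dz`. The identity `(z + z⁻¹) b_k((z - z⁻¹)²) = z^(2k+1) + z^(-(2k+1))` for the
Morgan–Voyce polynomial `b_k(x) = ∑ C(k+j, 2j) xʲ` therefore turns twice the integral into
`∫_ℝ b_k(u²) / (u² + c)^(m+1) du`, a combination of the integrals `∫_ℝ u^(2j) / (u² + c)^(m+1) du`.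
These are computed by scaling `u ↦ √c u` and integrating by parts; finally
`C(m - n + j, 2j) = C(k + j, 2j)` for the generalized binomial coefficient.
-/

section MorganVoyce

open Finset

variable {R : Type*} [CommRing R]

def morganVoyce (k : ℕ) (x : R) : R :=
  ∑ j ∈ range (k + 1), ((k + j).choose (2 * j) : R) * x ^ j

theorem choose_add_two_add_choose (N r : ℕ) :
    (N + 2).choose (r + 2) + N.choose (r + 2) = N.choose r + 2 * (N + 1).choose (r + 2) := by
  have h₁ : (N + 2).choose (r + 2) = (N + 1).choose (r + 1) + (N + 1).choose (r + 2) :=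
    Nat.choose_succ_succ' _ _
  have h₂ : (N + 1).choose (r + 2) = N.choose (r + 1) + N.choose (r + 2) :=
    Nat.choose_succ_succ' _ _
  have h₃ : (N + 1).choose (r + 1) = N.choose r + N.choose (r + 1) := Nat.choose_succ_succ' _ _
  omega

theorem morganVoyce_eq_one_add_sum {k N : ℕ} (hk : k ≤ N) (x : R) :
    morganVoyce k x
      = 1 + ∑ j ∈ range N, ((k + (j + 1)).choose (2 * (j + 1)) : R) * x ^ (j + 1) := by
  have hvanish : ∀ j ∈ range (N + 1), j ∉ range (k + 1) →
      ((k + j).choose (2 * j) : R) * x ^ j = 0 := by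
    intro j _ hj
    rw [Nat.choose_eq_zero_of_lt (by rw [mem_range] at hj; omega), Nat.cast_zero, zero_mul]
  rw [morganVoyce, sum_subset (range_subset_range.2 (by omega)) hvanish, sum_range_succ']
  simp [add_comm]

theorem morganVoyce_add_two (k : ℕ) (x : R) :
    morganVoyce (k + 2) x = (x + 2) * morganVoyce (k + 1) x - morganVoyce k x := by
  have hshift : x * morganVoyce (k + 1) x
      = ∑ j ∈ range (k + 2), ((k + 1 + j).choose (2 * j) : R) * x ^ (j + 1) := by
    rw [morganVoyce, mul_sum]
    exact sum_congr rfl fun j _ => by ring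
  have hpascal : ∑ j ∈ range (k + 2), ((k + 2 + (j + 1)).choose (2 * (j + 1)) : R) * x ^ (j + 1)
      - 2 * ∑ j ∈ range (k + 2), ((k + 1 + (j + 1)).choose (2 * (j + 1)) : R) * x ^ (j + 1)
      + ∑ j ∈ range (k + 2), ((k + (j + 1)).choose (2 * (j + 1)) : R) * x ^ (j + 1)
      = ∑ j ∈ range (k + 2), ((k + 1 + j).choose (2 * j) : R) * x ^ (j + 1) := by
    rw [mul_sum, ← sum_sub_distrib, ← sum_add_distrib]
    refine sum_congr rfl fun j _ => ?_
    have h := choose_add_two_add_choose (k + j + 1) (2 * j)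
    rw [show k + j + 1 + 2 = k + 2 + (j + 1) by omega, show 2 * j + 2 = 2 * (j + 1) by omega,
      show k + j + 1 + 1 = k + 1 + (j + 1) by omega, show k + j + 1 = k + (j + 1) by omega] at h
    have h' := congrArg (Nat.cast : ℕ → R) h
    push_cast at h'
    rw [show k + 1 + j = k + (j + 1) by omega]
    linear_combination x ^ (j + 1) * h'
  linear_combination morganVoyce_eq_one_add_sum (k := k + 2) le_rfl x
    - 2 * morganVoyce_eq_one_add_sum (k := k + 1) (N := k + 2) (by omega) x
    + morganVoyce_eq_one_add_sum (k := k) (N := k + 2) (by omega) x + hpascal - hshift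

theorem add_mul_morganVoyce_sub_sq (k : ℕ) {z w : R} (h : z * w = 1) :
    (z + w) * morganVoyce k ((z - w) ^ 2) = z ^ (2 * k + 1) + w ^ (2 * k + 1) := by
  induction k using Nat.twoStepInduction with
  | zero => simp [morganVoyce]
  | one =>
    have h₁ : morganVoyce 1 ((z - w) ^ 2) = 1 + (z - w) ^ 2 := by simp [morganVoyce, sum_range_succ]
    rw [h₁]
    linear_combination (-(z + w)) * h
  | more k ih₀ ih₁ =>
    rw [morganVoyce_add_two]
    linear_combination ((z - w) ^ 2 + 2) * ih₁ - ih₀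
      + ((z ^ (2 * k + 1) + w ^ (2 * k + 1)) * (z * w + 1)
        - 2 * (z ^ (2 * k + 3) + w ^ (2 * k + 3))) * h

end MorganVoyce

open MeasureTheory Real Set Filter Topology

theorem integrable_pow_div_pow {q : ℝ → ℝ} (hq : Continuous q) {ε : ℝ} (hε : 0 < ε) {s r p : ℕ}
    (hqle : ∀ x, ε * (1 + x ^ 2) ^ s ≤ q x) (hp : p < s * r) :
    Integrable fun x => x ^ (2 * p) / q x ^ r := by
  have hq₀ : ∀ x, 0 < q x := fun x => (by positivity : 0 < ε * (1 + x ^ 2) ^ s).trans_le (hqle x)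
  refine (integrable_inv_one_add_sq.const_mul (ε ^ r)⁻¹).mono'
    ((continuous_pow _).div (hq.pow r) fun x => (pow_pos (hq₀ x) r).ne').aestronglyMeasurable
    (ae_of_all _ fun x => ?_)
  have hnum : x ^ (2 * p) * (1 + x ^ 2) ≤ (1 + x ^ 2) ^ (s * r) := by
    calc x ^ (2 * p) * (1 + x ^ 2) ≤ (1 + x ^ 2) ^ p * (1 + x ^ 2) := by
          rw [pow_mul]; gcongr; linarith
      _ = (1 + x ^ 2) ^ (p + 1) := (pow_succ _ _).symm
      _ ≤ (1 + x ^ 2) ^ (s * r) := pow_le_pow_right₀ (by nlinarith [sq_nonneg x]) hp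
  have hden : ε ^ r * (1 + x ^ 2) ^ (s * r) ≤ q x ^ r := by
    rw [pow_mul, ← mul_pow]
    exact pow_le_pow_left₀ (by positivity) (hqle x) r
  have hnn : 0 ≤ x ^ (2 * p) / q x ^ r := by
    rw [pow_mul]; exact div_nonneg (by positivity) (pow_nonneg (hq₀ x).le r)
  rw [Real.norm_of_nonneg hnn, ← mul_inv, div_le_iff₀ (pow_pos (hq₀ x) r), ← div_eq_inv_mul,
    le_div_iff₀ (by positivity)]
  calc x ^ (2 * p) * (ε ^ r * (1 + x ^ 2)) = ε ^ r * (x ^ (2 * p) * (1 + x ^ 2)) := by ring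
    _ ≤ ε ^ r * (1 + x ^ 2) ^ (s * r) := by gcongr
    _ ≤ q x ^ r := hden

theorem tendsto_pow_div_one_add_sq_pow {p r : ℕ} (h : p < r) :
    Tendsto (fun x : ℝ => x ^ (2 * p + 1) / (1 + x ^ 2) ^ r) (cocompact ℝ) (𝓝 0) := by
  refine squeeze_zero_norm' ?_ tendsto_norm_cocompact_atTop.inv_tendsto_atTop
  filter_upwards [(isCompact_singleton (x := (0 : ℝ))).compl_mem_cocompact] with x hx
  have hx : 0 < ‖x‖ := norm_pos_iff.2 hx
  show _ ≤ ‖x‖⁻¹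
  rw [norm_div, norm_pow, norm_pow, Real.norm_of_nonneg (by positivity : (0:ℝ) ≤ 1 + x ^ 2),
    div_le_iff₀ (by positivity), ← div_eq_inv_mul, le_div_iff₀ hx, ← pow_succ,
    show 2 * p + 1 + 1 = 2 * (p + 1) by ring, pow_mul, Real.norm_eq_abs, sq_abs]
  exact (pow_le_pow_left₀ (sq_nonneg x) (by linarith) _).trans
    (pow_le_pow_right₀ (by nlinarith [sq_nonneg x]) h)

theorem integrable_pow_div_one_add_sq_pow {p r : ℕ} (h : p < r) :
    Integrable fun x : ℝ => x ^ (2 * p) / (1 + x ^ 2) ^ r :=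
  integrable_pow_div_pow (by fun_prop) one_pos (s := 1) (fun x => by simp) (by omega)

theorem integral_pow_div_one_add_sq_pow_succ_succ {j l : ℕ} (h : j ≤ l) :
    (2 * (l : ℝ) + 2) * ∫ u : ℝ, u ^ (2 * (j + 1)) / (1 + u ^ 2) ^ (l + 2)
      = (2 * (j : ℝ) + 1) * ∫ u : ℝ, u ^ (2 * j) / (1 + u ^ 2) ^ (l + 1) := by
  have hderiv : ∀ u : ℝ, HasDerivAt (fun u => u ^ (2 * j + 1) / (1 + u ^ 2) ^ (l + 1))
      ((2 * (j : ℝ) + 1) * (u ^ (2 * j) / (1 + u ^ 2) ^ (l + 1))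
        - (2 * (l : ℝ) + 2) * (u ^ (2 * (j + 1)) / (1 + u ^ 2) ^ (l + 2))) u := by
    intro u
    have hu : (1 + u ^ 2) ≠ 0 := by positivity
    refine ((hasDerivAt_pow (2 * j + 1) u).fun_div
      (((hasDerivAt_pow 2 u).const_add 1).fun_pow (l + 1)) (pow_ne_zero _ hu)).congr_deriv ?_
    simp only [Nat.add_sub_cancel, show 2 - 1 = 1 from rfl]
    field_simp
    push_cast
    ring
  have hlim := tendsto_pow_div_one_add_sq_pow (p := j) (r := l + 1) (by omega)
  have hi₁ := (integrable_pow_div_one_add_sq_pow (p := j) (r := l + 1) (by omega)).const_mul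
    (2 * (j : ℝ) + 1)
  have hi₂ := (integrable_pow_div_one_add_sq_pow (p := j + 1) (r := l + 2) (by omega)).const_mul
    (2 * (l : ℝ) + 2)
  have h0 := integral_of_hasDerivAt_of_tendsto hderiv (hi₁.sub hi₂)
    (hlim.mono_left atBot_le_cocompact) (hlim.mono_left atTop_le_cocompact)
  rw [integral_sub hi₁ hi₂, integral_const_mul, integral_const_mul, sub_self] at h0
  linarith

theorem cast_centralBinom_succ (n : ℕ) :
    ((n + 1).centralBinom : ℝ) = 2 * (2 * n + 1) * n.centralBinom / (n + 1) := by
  rw [eq_div_iff (by positivity)]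
  exact_mod_cast (mul_comm _ _).trans (Nat.succ_mul_centralBinom_succ n)

theorem integral_one_div_one_add_sq_pow (d : ℕ) :
    ∫ u : ℝ, 1 / (1 + u ^ 2) ^ (d + 1) = π * d.centralBinom / 4 ^ d := by
  induction d with
  | zero => simp [integral_univ_inv_one_add_sq]
  | succ d ih =>
    have hibp := integral_pow_div_one_add_sq_pow_succ_succ (j := 0) (l := d) (Nat.zero_le d)
    have hsplit : ∫ u : ℝ, u ^ (2 * (0 + 1)) / (1 + u ^ 2) ^ (d + 2)
        = (∫ u : ℝ, 1 / (1 + u ^ 2) ^ (d + 1)) - ∫ u : ℝ, 1 / (1 + u ^ 2) ^ (d + 2) := by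
      have hi : ∀ r, 0 < r → Integrable fun u : ℝ => 1 / (1 + u ^ 2) ^ r := fun r hr => by
        simpa using integrable_pow_div_one_add_sq_pow (p := 0) (r := r) hr
      rw [← integral_sub (hi (d + 1) (by omega)) (hi (d + 2) (by omega))]
      refine integral_congr_ae (ae_of_all _ fun u => ?_)
      have hu : (1 + u ^ 2) ≠ 0 := by positivity
      field_simp
      ring
    simp only [mul_zero, Nat.cast_zero, zero_add, one_mul, pow_zero, hsplit, ih] at hibp
    rw [cast_centralBinom_succ]
    field_simp at hibp ⊢
    linear_combination -2 * hibp

theorem integral_pow_div_one_add_sq_pow (j d : ℕ) :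
    ∫ u : ℝ, u ^ (2 * j) / (1 + u ^ 2) ^ (j + d + 1)
      = π * j.centralBinom * d.centralBinom / (4 ^ (j + d) * (j + d).choose j) := by
  induction j with
  | zero => simpa using integral_one_div_one_add_sq_pow d
  | succ j ih =>
    have hibp := integral_pow_div_one_add_sq_pow_succ_succ (j := j) (l := j + d) (by omega)
    rw [ih, show j + d + 2 = j + 1 + d + 1 by omega] at hibp
    have hch : ((j + 1 + d).choose (j + 1) : ℝ) = (j + d + 1) * (j + d).choose j / (j + 1) := by
      rw [eq_div_iff (by positivity), show j + 1 + d = j + d + 1 by omega]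
      exact_mod_cast (Nat.add_one_mul_choose_eq (j + d) j).symm
    rw [cast_centralBinom_succ, hch]
    have : ((j + d).choose j : ℝ) ≠ 0 := by exact_mod_cast (Nat.choose_pos (by omega)).ne'
    field_simp at hibp ⊢
    push_cast at hibp
    linear_combination 2 * hibp

theorem integral_pow_div_sq_add_pow {c : ℝ} (hc : 0 < c) (j l : ℕ) :
    ∫ u : ℝ, u ^ (2 * j) / (u ^ 2 + c) ^ (l + 1)
      = √c * c ^ j / c ^ (l + 1) * ∫ u : ℝ, u ^ (2 * j) / (1 + u ^ 2) ^ (l + 1) := by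
  have hs : 0 < √c := sqrt_pos.2 hc
  have h := Measure.integral_comp_mul_left (fun u : ℝ => u ^ (2 * j) / (u ^ 2 + c) ^ (l + 1)) √c
  have hpt : ∀ v : ℝ, (√c * v) ^ (2 * j) / ((√c * v) ^ 2 + c) ^ (l + 1)
      = c ^ j / c ^ (l + 1) * (v ^ (2 * j) / (1 + v ^ 2) ^ (l + 1)) := by
    intro v
    have hv : 1 + v ^ 2 ≠ 0 := by positivity
    rw [mul_pow, pow_mul, sq_sqrt hc.le, mul_pow, sq_sqrt hc.le,
      show c * v ^ 2 + c = c * (1 + v ^ 2) by ring, mul_pow]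
    field_simp
  simp only [hpt, integral_const_mul, abs_inv, abs_of_pos hs, smul_eq_mul] at h
  rw [mul_div_assoc, mul_assoc, h, ← mul_assoc, mul_inv_cancel₀ hs.ne', one_mul]

theorem integral_Ioi_comp_inv {E : Type*} [NormedAddCommGroup E] [NormedSpace ℝ E] (g : ℝ → E) :
    ∫ x in Ioi 0, (x ^ 2)⁻¹ • g x⁻¹ = ∫ x in Ioi 0, g x := by
  rw [← integral_comp_rpow_Ioi g (p := -1) (by norm_num)]
  refine setIntegral_congr_fun measurableSet_Ioi fun x (hx : 0 < x) => ?_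
  norm_num [rpow_neg_one, rpow_neg hx.le]

theorem image_sub_inv_Ioi : (fun x : ℝ => x - x⁻¹) '' Ioi 0 = univ := by
  refine eq_univ_of_forall fun u => ?_
  have hs : √(u ^ 2 + 4) ^ 2 = u ^ 2 + 4 := sq_sqrt (by positivity)
  have hu : |u| < √(u ^ 2 + 4) := by
    rw [← sqrt_sq_eq_abs]
    exact sqrt_lt_sqrt (sq_nonneg u) (by linarith)
  have hpos : 0 < u + √(u ^ 2 + 4) := by linarith [neg_abs_le u]
  refine ⟨(u + √(u ^ 2 + 4)) / 2, div_pos hpos two_pos, ?_⟩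
  field_simp
  linear_combination hs

theorem strictMonoOn_sub_inv : StrictMonoOn (fun x : ℝ => x - x⁻¹) (Ioi 0) :=
  fun x hx y hy hxy => by
    have := inv_strictAntiOn hx hy hxy
    simp only
    linarith

theorem integral_comp_sub_inv {E : Type*} [NormedAddCommGroup E] [NormedSpace ℝ E] (g : ℝ → E) :
    ∫ x in Ioi 0, (1 + (x ^ 2)⁻¹) • g (x - x⁻¹) = ∫ x, g x := by
  have hderiv : ∀ x ∈ Ioi (0 : ℝ),
      HasDerivWithinAt (fun x => x - x⁻¹) (1 + (x ^ 2)⁻¹) (Ioi 0) x := fun x hx =>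
    (((hasDerivAt_id' x).fun_sub (hasDerivAt_inv (ne_of_gt hx))).congr_deriv
      (by ring)).hasDerivWithinAt
  have h := integral_image_eq_integral_abs_deriv_smul measurableSet_Ioi hderiv
    strictMonoOn_sub_inv.injOn g
  rw [image_sub_inv_Ioi, setIntegral_univ] at h
  rw [h]
  exact setIntegral_congr_fun measurableSet_Ioi fun x _ => by rw [abs_of_pos (by positivity)]

theorem integrable_pow_div_quartic_pow {a : ℝ} (ha : -1 < a) {m p : ℕ} (hp : p ≤ 2 * m + 1) :
    Integrable fun z : ℝ => z ^ (2 * p) / (z ^ 4 + 2 * a * z ^ 2 + 1) ^ (m + 1) := by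
  have h₁ : min 1 ((1 + a) / 2) ≤ 1 := min_le_left _ _
  have h₂ : min 1 ((1 + a) / 2) ≤ (1 + a) / 2 := min_le_right _ _
  refine integrable_pow_div_pow (by fun_prop) (ε := min 1 ((1 + a) / 2))
    (lt_min one_pos (by linarith)) (s := 2) (fun z => ?_) (by omega)
  nlinarith [mul_le_mul_of_nonneg_right h₁ (sq_nonneg (z ^ 2 - 1)),
    mul_le_mul_of_nonneg_right h₂ (sq_nonneg z)]

theorem integral_Ioi_pow_div_quartic_pow_comm (a : ℝ) {m p q : ℕ} (h : p + q = 2 * m + 1) :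
    ∫ z in Ioi 0, z ^ (2 * p) / (z ^ 4 + 2 * a * z ^ 2 + 1) ^ (m + 1)
      = ∫ z in Ioi 0, z ^ (2 * q) / (z ^ 4 + 2 * a * z ^ 2 + 1) ^ (m + 1) := by
  rw [← integral_Ioi_comp_inv]
  refine setIntegral_congr_fun measurableSet_Ioi fun z (hz : 0 < z) => ?_
  have hpq : z ^ 2 * z ^ (2 * p) * z ^ (2 * q) = (z ^ 4) ^ (m + 1) := by
    rw [← pow_add, ← pow_add, ← pow_mul]; congr 1; omega
  simp only [smul_eq_mul, inv_pow]
  field_simp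
  rw [hpq, div_pow, one_div_div]
  ring

theorem one_add_inv_sq_mul_morganVoyce_div {z : ℝ} (hz : z ≠ 0) (a : ℝ) {k m : ℕ} (hk : k ≤ m) :
    (1 + (z ^ 2)⁻¹) * (morganVoyce k ((z - z⁻¹) ^ 2) / ((z - z⁻¹) ^ 2 + 2 * (1 + a)) ^ (m + 1))
      = z ^ (2 * (m + 1 + k)) / (z ^ 4 + 2 * a * z ^ 2 + 1) ^ (m + 1)
        + z ^ (2 * (m - k)) / (z ^ 4 + 2 * a * z ^ 2 + 1) ^ (m + 1) := by
  obtain ⟨d, rfl⟩ := Nat.exists_eq_add_of_le hk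
  have hM := add_mul_morganVoyce_sub_sq k (mul_inv_cancel₀ hz)
  have hQ : z ^ 4 + 2 * a * z ^ 2 + 1 = z ^ 2 * ((z - z⁻¹) ^ 2 + 2 * (1 + a)) := by
    field_simp
    ring
  have hpow : z⁻¹ * (z ^ (2 * k + 1) + z⁻¹ ^ (2 * k + 1))
      = (z ^ (2 * (k + d + 1 + k)) + z ^ (2 * d)) / (z ^ 2) ^ (k + d + 1) := by
    rw [inv_pow]
    field_simp
    ring
  rw [hQ, ← add_div, Nat.add_sub_cancel_left, mul_pow, ← div_div, ← hpow, ← hM]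
  field_simp

theorem integral_morganVoyce_div_sq_add_pow {a : ℝ} (ha : -1 < a) {k m : ℕ} (hk : k ≤ m) :
    ∫ u : ℝ, morganVoyce k (u ^ 2) / (u ^ 2 + 2 * (1 + a)) ^ (m + 1)
      = 2 * ∫ z in Ioi 0, z ^ (2 * (m + 1 + k)) / (z ^ 4 + 2 * a * z ^ 2 + 1) ^ (m + 1) := by
  rw [← integral_comp_sub_inv, setIntegral_congr_fun measurableSet_Ioi fun z (hz : 0 < z) => by
      rw [smul_eq_mul, one_add_inv_sq_mul_morganVoyce_div hz.ne' a hk],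
    integral_add (integrable_pow_div_quartic_pow ha (by omega)).integrableOn
      (integrable_pow_div_quartic_pow ha (by omega)).integrableOn,
    integral_Ioi_pow_div_quartic_pow_comm a (p := m - k) (q := m + 1 + k) (by omega)]
  ring

theorem integral_morganVoyce_div_sq_add_pow_eq_sum {c : ℝ} (hc : 0 < c) {k m : ℕ} (hk : k ≤ m) :
    ∫ u : ℝ, morganVoyce k (u ^ 2) / (u ^ 2 + c) ^ (m + 1)
      = ∑ j ∈ Finset.range (k + 1), ((k + j).choose (2 * j) : ℝ) * (√c * c ^ j / c ^ (m + 1)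
          * (π * j.centralBinom * (m - j).centralBinom / (4 ^ m * m.choose j))) := by
  have hint : ∀ j ≤ m, Integrable fun u : ℝ => u ^ (2 * j) / (u ^ 2 + c) ^ (m + 1) := fun j hj =>
    integrable_pow_div_pow (by fun_prop) (ε := min 1 c) (lt_min one_pos hc) (s := 1)
      (fun u => by nlinarith [min_le_right 1 c,
        mul_le_mul_of_nonneg_right (min_le_left 1 c) (sq_nonneg u)]) (by omega)
  simp only [morganVoyce, Finset.sum_div, ← pow_mul, mul_div_assoc]
  rw [integral_finsetSum _ fun j hj => (hint j (by rw [Finset.mem_range] at hj; omega)).const_mul _]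
  refine Finset.sum_congr rfl fun j hj => ?_
  have hjm : j ≤ m := by rw [Finset.mem_range] at hj; omega
  have hW := integral_pow_div_one_add_sq_pow j (m - j)
  rw [Nat.add_sub_cancel' hjm] at hW
  rw [integral_const_mul, integral_pow_div_sq_add_pow hc, hW]
  ring

theorem ringChoose_natCast_sub_succ (R : Type*) [CommRing R] [BinomialRing R] (j k : ℕ) :
    Ring.choose ((j : R) - (k + 1)) (2 * j) = (k + j).choose (2 * j) := by
  have h := Ring.choose_neg (((k + 1 : ℕ) : R) - j) (2 * j)
  rw [show -(((k + 1 : ℕ) : R) - j) = (j : R) - (k + 1) by push_cast; ring,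
    show ((k + 1 : ℕ) : R) - j + ((2 * j : ℕ) : R) - 1 = ((k + j : ℕ) : R) by push_cast; ring,
    Ring.choose_natCast] at h
  rw [h]
  simp

theorem sqrt_two_mul_div_eq_inv_rpow {t : ℝ} (ht : 0 < t) (m : ℕ) :
    √(2 * t) / (2 * (2 * t) ^ (m + 1) * 4 ^ m)
      = ((2 : ℝ) ^ (3 * (m : ℝ) + 3 / 2) * t ^ ((m : ℝ) + 1 / 2))⁻¹ := by
  have h2 : (2 : ℝ) ^ (3 * (m : ℝ) + 3 / 2) = 2 ^ (3 * m + 1) * √2 := by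
    rw [show 3 * (m : ℝ) + 3 / 2 = ((3 * m + 1 : ℕ) : ℝ) + 1 / 2 by push_cast; ring,
      rpow_add two_pos, rpow_natCast, sqrt_eq_rpow]
  have ht' : t ^ ((m : ℝ) + 1 / 2) = t ^ m * √t := by
    rw [rpow_add ht, rpow_natCast, sqrt_eq_rpow]
  have hs2 : √2 ^ 2 = 2 := sq_sqrt zero_le_two
  have hst : √t ^ 2 = t := sq_sqrt ht.le
  have : 0 < √t := sqrt_pos.2 ht
  rw [h2, ht', sqrt_mul zero_le_two, show (4 : ℝ) ^ m = 2 ^ (2 * m) by rw [pow_mul]; norm_num]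
  field_simp
  linear_combination (√t ^ 2 * 2 ^ (3 * m + 1) * t ^ m) * hs2 + (2 * 2 ^ (3 * m + 1) * t ^ m) * hst

theorem quartic_integral_high (m n : ℕ) (hn1 : m + 1 ≤ n) (hn2 : n ≤ 2 * m + 1)
    (a : ℝ) (ha : -1 < a) :
    ∫ z in Set.Ioi (0 : ℝ), z ^ (2 * n) / (z ^ 4 + 2 * a * z ^ 2 + 1) ^ (m + 1)
      = Real.pi / ((2 : ℝ) ^ (3 * (m : ℝ) + 3 / 2) * (1 + a) ^ ((m : ℝ) + 1 / 2))
        * ∑ j ∈ Finset.range (n - m - 1 + 1),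
            2 ^ j * (1 + a) ^ j * Nat.choose (2 * m - 2 * j) (m - j)
              * (Ring.choose ((m : ℝ) - n + j) (2 * j))
              * Nat.choose (2 * j) j * (Nat.choose m j : ℝ)⁻¹ := by
  obtain ⟨k, rfl⟩ : ∃ k, n = m + 1 + k := ⟨n - m - 1, by omega⟩
  have hk : k ≤ m := by omega
  have h2I := integral_morganVoyce_div_sq_add_pow ha hk
  rw [integral_morganVoyce_div_sq_add_pow_eq_sum (by linarith) hk] at h2I
  rw [show m + 1 + k - m - 1 + 1 = k + 1 by omega, ← mul_right_inj' (two_ne_zero' ℝ), ← h2I,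
    Finset.mul_sum, Finset.mul_sum]
  set t := 1 + a
  refine Finset.sum_congr rfl fun j _ => ?_
  rw [show (m : ℝ) - (m + 1 + k : ℕ) + j = j - (k + 1) by push_cast; ring,
    ringChoose_natCast_sub_succ, show 2 * m - 2 * j = 2 * (m - j) by omega,
    ← Nat.centralBinom_eq_two_mul_choose, ← Nat.centralBinom_eq_two_mul_choose, div_eq_mul_inv π,
    ← sqrt_two_mul_div_eq_inv_rpow (by linarith) m]
  ring_nf
end

section
/- The curve X₁ with equation (9+5a₁+5a₂+a₁a₂)³ = (a₁+a₂+2)²(a₁+a₂+6)³ in the (a₁,a₂)-plane is parametrized by a₁(t) = t^(−2)(t⁵−t⁴+2t³−t²+t+1) and a₂(t) = t^(−3)(t⁵+t⁴−t³+2t²−t+1); that is, for all t ≠ 0, the pair (a₁(t), a₂(t)) satisfies the equation of X₁. -/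
theorem curve_X1_parametrization (t : ℝ) (ht : t ≠ 0) :
    let a₁ := t ^ (-2 : ℤ) * (t ^ 5 - t ^ 4 + 2 * t ^ 3 - t ^ 2 + t + 1)
    let a₂ := t ^ (-3 : ℤ) * (t ^ 5 + t ^ 4 - t ^ 3 + 2 * t ^ 2 - t + 1)
    (9 + 5 * a₁ + 5 * a₂ + a₁ * a₂) ^ 3 = (a₁ + a₂ + 2) ^ 2 * (a₁ + a₂ + 6) ^ 3 := by
  intro a₁ a₂
  have h2 : t ^ (-2 : ℤ) = (t ^ 2)⁻¹ := by
    rw [zpow_neg]; norm_cast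
  have h3 : t ^ (-3 : ℤ) = (t ^ 3)⁻¹ := by
    rw [zpow_neg]; norm_cast
  show (9 + 5 * a₁ + 5 * a₂ + a₁ * a₂) ^ 3 = (a₁ + a₂ + 2) ^ 2 * (a₁ + a₂ + 6) ^ 3
  simp only [a₁, a₂, h2, h3]
  field_simp
  ring
end
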